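/- Let M be a matroid on a finite set E with rank function r and let F_1, …, F_m ⊆ E. There exists a base B of M with |B ∩ F_i| = r(F_i) for all i ∈ {1,…,m} if and only if ∑_{σ ⊆ {1,…,m}} r_{M/F_σ⁺}(F_σ⁻ ∖ F_σ⁺) = r(E), where r_{M/F_σ⁺} denotes the rank function of the contraction M/F_σ⁺. -/

import Mathlib

open Finset

/-- A (finite) matroid on a finite ground set `E`, given by a submodular rank function,
following the matroid rank axioms (R1)-(R3). -/
structure FinMatroid (α : Type*) [DecidableEq α] where
  E : Finset α
  r : Finset α → ℕ
  r_le_card : ∀ ⦃A : Finset α⦄, A ⊆ E → r A ≤ A.card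
  r_mono : ∀ ⦃A B : Finset α⦄, A ⊆ B → B ⊆ E → r A ≤ r B
  r_submod : ∀ ⦃A B : Finset α⦄, A ⊆ E → B ⊆ E → r (A ∪ B) + r (A ∩ B) ≤ r A + r B

namespace FinMatroid

variable {α : Type*} [DecidableEq α]

/-- A set is independent if it is a subset of the ground set whose rank is its cardinality. -/
def Indep (M : FinMatroid α) (A : Finset α) : Prop :=
  A ⊆ M.E ∧ M.r A = A.card

/-- A base is a maximal independent set. -/
def Base (M : FinMatroid α) (B : Finset α) : Prop :=
  M.Indep B ∧ ∀ ⦃A : Finset α⦄, M.Indep A → B ⊆ A → A = B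

/-- A basis of `A` is a maximal independent subset of `A`. -/
def BasisOf (M : FinMatroid α) (I A : Finset α) : Prop :=
  I ⊆ A ∧ M.Indep I ∧ ∀ ⦃J : Finset α⦄, J ⊆ A → M.Indep J → I ⊆ J → J = I

/-- A flat is a set `F` with `F = {s ∈ E : r (F ∪ {s}) = r F}`. -/
def Flat (M : FinMatroid α) (F : Finset α) : Prop :=
  F = M.E.filter (fun s => M.r (F ∪ {s}) = M.r F)

/-- A matroid is loopless if every singleton of the ground set has rank one. -/
def Loopless (M : FinMatroid α) : Prop :=
  ∀ s ∈ M.E, M.r {s} = 1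

/-- The restriction `M|A` of `M` to `A`. -/
def restrict (M : FinMatroid α) (A : Finset α) : FinMatroid α where
  E := A ∩ M.E
  r := M.r
  r_le_card := fun _ h => M.r_le_card (h.trans inter_subset_right)
  r_mono := fun _ _ h h' => M.r_mono h (h'.trans inter_subset_right)
  r_submod := fun _ _ h h' =>
    M.r_submod (h.trans inter_subset_right) (h'.trans inter_subset_right)

/-- The contraction `M/C` of `C` in `M`, with rank function `A ↦ r (A ∪ C) - r C`. -/
def contract (M : FinMatroid α) (C : Finset α) : FinMatroid α where
  E := M.E \ C
  r := fun A => M.r (A ∪ C ∩ M.E) - M.r (C ∩ M.E)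
  r_le_card := by
    intro A hA
    have hAE : A ⊆ M.E := hA.trans sdiff_subset
    have hc : C ∩ M.E ⊆ M.E := inter_subset_right
    have h1 := M.r_submod hAE hc
    have h2 := M.r_le_card hAE
    beta_reduce
    omega
  r_mono := by
    intro A B hAB hB
    have hBE : B ⊆ M.E := hB.trans sdiff_subset
    have hc : C ∩ M.E ⊆ M.E := inter_subset_right
    have h1 : M.r (A ∪ C ∩ M.E) ≤ M.r (B ∪ C ∩ M.E) :=
      M.r_mono (union_subset_union hAB (Finset.Subset.refl _)) (union_subset hBE hc)
    beta_reduce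
    omega
  r_submod := by
    intro A B hA hB
    have hAE : A ⊆ M.E := hA.trans sdiff_subset
    have hBE : B ⊆ M.E := hB.trans sdiff_subset
    have hc : C ∩ M.E ⊆ M.E := inter_subset_right
    have hAc : A ∪ C ∩ M.E ⊆ M.E := union_subset hAE hc
    have hBc : B ∪ C ∩ M.E ⊆ M.E := union_subset hBE hc
    have h1 := M.r_submod hAc hBc
    have e1 : (A ∪ C ∩ M.E) ∪ (B ∪ C ∩ M.E) = (A ∪ B) ∪ C ∩ M.E := by
      ext x; simp only [Finset.mem_union, Finset.mem_inter]; tauto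
    have e2 : (A ∪ C ∩ M.E) ∩ (B ∪ C ∩ M.E) = (A ∩ B) ∪ C ∩ M.E := by
      ext x; simp only [Finset.mem_union, Finset.mem_inter]; tauto
    rw [e1, e2] at h1
    have hABc : (A ∩ B) ∪ C ∩ M.E ⊆ M.E := union_subset (inter_subset_left.trans hAE) hc
    have hABc' : (A ∪ B) ∪ C ∩ M.E ⊆ M.E := union_subset (union_subset hAE hBE) hc
    have h2 : M.r (C ∩ M.E) ≤ M.r ((A ∩ B) ∪ C ∩ M.E) := M.r_mono subset_union_right hABc
    have h3 : M.r (C ∩ M.E) ≤ M.r (A ∪ C ∩ M.E) := M.r_mono subset_union_right hAc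
    have h4 : M.r (C ∩ M.E) ≤ M.r (B ∪ C ∩ M.E) := M.r_mono subset_union_right hBc
    have h5 : M.r (C ∩ M.E) ≤ M.r ((A ∪ B) ∪ C ∩ M.E) := M.r_mono subset_union_right hABc'
    beta_reduce
    omega

/-- `A` is a separator of `M` if `r A + r (E \ A) = r E`. -/
def Separator (M : FinMatroid α) (A : Finset α) : Prop :=
  A ⊆ M.E ∧ M.r A + M.r (M.E \ A) = M.r M.E

/-- `M` is connected (inseparable) if its ground set is nonempty and its only
separators are `∅` and `E`. -/
def Connected (M : FinMatroid α) : Prop :=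
  M.E.Nonempty ∧ ∀ A : Finset α, M.Separator A → A = ∅ ∨ A = M.E

/-- For connected `M`, a set `∅ ≠ F ⊊ E` is non-degenerate if both `M|F` and `M/F`
are connected. -/
def Nondegenerate (M : FinMatroid α) (F : Finset α) : Prop :=
  F ≠ ∅ ∧ F ⊂ M.E ∧ (M.restrict F).Connected ∧ (M.contract F).Connected

end FinMatroid

noncomputable section

open FinMatroid

/-- The indicator (incidence) vector `1^A ∈ ℝ^α` of a finite set `A`. -/
def indicatorVec {α : Type*} [DecidableEq α] (A : Finset α) : α → ℝ :=
  fun i => if i ∈ A then 1 else 0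

/-- The base polytope of a matroid: the convex hull of the indicator vectors of its bases. -/
def basePolytope {α : Type*} [DecidableEq α] (M : FinMatroid α) : Set (α → ℝ) :=
  convexHull ℝ {x | ∃ B : Finset α, M.Base B ∧ x = indicatorVec B}

/-- `Q` is a face of `P`: either `∅`, or `P` itself, or the subset of `P` where some
linear functional attains its maximum over `P` (an exposed face). -/
def IsFaceOf {α : Type*} (P Q : Set (α → ℝ)) : Prop :=
  Q = ∅ ∨ Q = P ∨ ∃ ℓ : (α → ℝ) →ₗ[ℝ] ℝ, Q = {x ∈ P | ∀ y ∈ P, ℓ y ≤ ℓ x}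

/-- The dimension of a convex set: the dimension of the direction of its affine span. -/
def sdim {α : Type*} (Q : Set (α → ℝ)) : ℕ :=
  Module.finrank ℝ (affineSpan ℝ Q).direction

end

/-- `F_σ⁺ := ⋃_{i ∈ σ} F i`. -/
def Fplus {α : Type*} [DecidableEq α] {m : ℕ} (F : Fin m → Finset α) (σ : Finset (Fin m)) :
    Finset α :=
  σ.sup F

/-- `F_σ⁻ := ⋂_{j ∉ σ} F j`, with the empty intersection equal to the ground set `E`. -/
def Fminus {α : Type*} [DecidableEq α] {m : ℕ} (M : FinMatroid α) (F : Fin m → Finset α)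
    (σ : Finset (Fin m)) : Finset α :=
  M.E.filter (fun x => ∀ j, j ∉ σ → x ∈ F j)

/-!
Partition `E` into the cells `A_σ = F_σ⁻ \ F_σ⁺`. Refining the partition by one more set `F i`
splits the term of `A_σ` into the terms of `A_σ ∩ F i` and `A_σ \ F i`, and submodularity says this
can only decrease the sum; with no sets at all the sum is `r E`, so it is always at most `r E`.

If `B` is a base meeting each `F i` in `r (F i)` elements, then `B ∩ F_σ⁺` spans `F_σ⁺`, so `B`
meets the cell `A_σ` in at most `r_{M/F_σ⁺}(A_σ)` elements; summing over the cells gives `r E`.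

Conversely, if the sum is `r E`, splitting along `F i` shows that the corresponding sums for
`M|F i` (with the sets `F j ∩ F i`) and for `M/F i` (with the sets `F j \ F i`) are maximal as
well, and that `F i` forms a modular pair with every `F j`. By induction on the number of sets these
minors have bases `B₁`, `B₂` of the required kind; `B₁ ∪ B₂` is a base of `M`, and modularity of
`(F j, F i)` is exactly what makes `|(B₁ ∪ B₂) ∩ F j| = r (F j)`.
-/

namespace FinMatroid

variable {α : Type*} [DecidableEq α]

lemma r_empty (M : FinMatroid α) : M.r ∅ = 0 :=
  Nat.le_zero.mp (by simpa using M.r_le_card (empty_subset M.E))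

variable {M : FinMatroid α}

lemma r_union_eq_of_r_eq {X Y Z : Finset α} (hXY : X ⊆ Y) (hY : Y ⊆ M.E) (hZ : Z ⊆ M.E)
    (h : M.r X = M.r Y) : M.r (X ∪ Z) = M.r (Y ∪ Z) := by
  have hsub := M.r_submod (union_subset (hXY.trans hY) hZ) hY
  rw [union_right_comm, union_eq_right.mpr hXY] at hsub
  have hX : M.r X ≤ M.r ((X ∪ Z) ∩ Y) :=
    M.r_mono (subset_inter subset_union_left hXY) (inter_subset_right.trans hY)
  exact le_antisymm (M.r_mono (union_subset_union_left hXY) (union_subset hY hZ)) (by omega)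

lemma r_sup_eq_of_r_eq {ι : Type*} [DecidableEq ι] {s : Finset ι} {X Y : ι → Finset α}
    (hXY : ∀ i ∈ s, X i ⊆ Y i) (hY : ∀ i ∈ s, Y i ⊆ M.E)
    (h : ∀ i ∈ s, M.r (X i) = M.r (Y i)) : M.r (s.sup X) = M.r (s.sup Y) := by
  induction s using Finset.induction_on with
  | empty => rfl
  | insert i s hi ih =>
    simp only [forall_mem_insert] at hXY hY h
    have hsXY : s.sup X ⊆ s.sup Y := Finset.sup_mono_fun hXY.2
    have hsY : s.sup Y ⊆ M.E := Finset.sup_le hY.2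
    rw [sup_insert, sup_insert]
    calc M.r (X i ∪ s.sup X) = M.r (Y i ∪ s.sup X) :=
          r_union_eq_of_r_eq hXY.1 hY.1 (hsXY.trans hsY) h.1
      _ = M.r (s.sup Y ∪ Y i) := by
          rw [union_comm, r_union_eq_of_r_eq hsXY hsY hY.1 (ih hXY.2 hY.2 h.2)]
      _ = M.r (Y i ∪ s.sup Y) := by rw [union_comm]

lemma Indep.subset {B I : Finset α} (hB : M.Indep B) (hIB : I ⊆ B) : M.Indep I := by
  have hIE : I ⊆ M.E := hIB.trans hB.1
  have hDE : B \ I ⊆ M.E := sdiff_subset.trans hB.1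
  refine ⟨hIE, le_antisymm (M.r_le_card hIE) ?_⟩
  have hsub := M.r_submod hIE hDE
  rw [union_sdiff_of_subset hIB, inter_sdiff_self, r_empty] at hsub
  have := M.r_le_card hDE
  have := card_sdiff_add_card_eq_card hIB
  have := hB.2
  omega

lemma Indep.card_inter_le {B A : Finset α} (hB : M.Indep B) (hA : A ⊆ M.E) :
    (B ∩ A).card ≤ M.r A := by
  rw [← (hB.subset inter_subset_left).2]
  exact M.r_mono inter_subset_right hA

lemma Base.r_insert {B : Finset α} (hB : M.Base B) {s : α} (hs : s ∈ M.E) :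
    M.r (insert s B) = M.r B := by
  by_cases hsB : s ∈ B
  · rw [insert_eq_of_mem hsB]
  have hsE : insert s B ⊆ M.E := insert_subset hs hB.1.1
  refine le_antisymm ?_ (M.r_mono (subset_insert s B) hsE)
  by_contra hlt
  have hind : M.Indep (insert s B) := by
    refine ⟨hsE, le_antisymm (M.r_le_card hsE) ?_⟩
    rw [card_insert_of_notMem hsB]
    have := hB.1.2
    omega
  exact hsB (hB.2 hind (subset_insert s B) ▸ mem_insert_self s B)

lemma Base.r_eq {B : Finset α} (hB : M.Base B) : M.r B = M.r M.E := by
  have key : ∀ S ⊆ M.E, M.r (S ∪ B) = M.r B := by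
    intro S
    induction S using Finset.induction_on with
    | empty => simp
    | insert s S hs ih =>
      intro hSE
      rw [insert_subset_iff] at hSE
      calc M.r (insert s S ∪ B) = M.r (insert s B ∪ S) := by
            rw [insert_union, insert_union, union_comm]
        _ = M.r (B ∪ S) := (r_union_eq_of_r_eq (subset_insert s B)
            (insert_subset hSE.1 hB.1.1) hSE.2 (hB.r_insert hSE.1).symm).symm
        _ = M.r B := by rw [union_comm, ih hSE.2]
  simpa [union_eq_left.mpr hB.1.1] using (key M.E Subset.rfl).symm

lemma Base.card_eq {B : Finset α} (hB : M.Base B) : B.card = M.r M.E := by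
  rw [← hB.r_eq, hB.1.2]

lemma Indep.base_of_card_eq {I : Finset α} (hI : M.Indep I) (h : I.card = M.r M.E) :
    M.Base I := by
  refine ⟨hI, fun A hA hIA => (eq_of_subset_of_card_le hIA ?_).symm⟩
  have := hA.2
  have := M.r_mono hA.1 Subset.rfl
  omega

lemma exists_base (M : FinMatroid α) : ∃ B, M.Base B := by
  obtain ⟨B, hBmem, hBmax⟩ := Finset.exists_max_image
    (M.E.powerset.filter fun A => M.r A = A.card) Finset.card ⟨∅, by simp [M.r_empty]⟩
  simp only [mem_filter, mem_powerset] at hBmem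
  refine ⟨B, hBmem, fun A hA hBA => (eq_of_subset_of_card_le hBA ?_).symm⟩
  exact hBmax A (mem_filter.mpr ⟨mem_powerset.mpr hA.1, hA.2⟩)

lemma contract_r {C : Finset α} (hC : C ⊆ M.E) (A : Finset α) :
    (M.contract C).r A = M.r (A ∪ C) - M.r C := by
  simp only [contract, inter_eq_left.mpr hC]

lemma contract_r_E {H : Finset α} (hH : H ⊆ M.E) :
    (M.contract H).r (M.contract H).E = M.r M.E - M.r H := by
  rw [contract_r hH, show (M.contract H).E = M.E \ H from rfl, sdiff_union_of_subset hH]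

lemma restrict_r_E {H : Finset α} (hH : H ⊆ M.E) : (M.restrict H).r (M.restrict H).E = M.r H := by
  show M.r (H ∩ M.E) = M.r H
  rw [inter_eq_left.mpr hH]

lemma restrict_contract_r {H C : Finset α} (hC : C ⊆ H ∩ M.E) (G : Finset α) :
    ((M.restrict H).contract C).r G = (M.contract C).r G := by
  rw [contract_r hC, contract_r (hC.trans inter_subset_right)]
  rfl

lemma contract_contract_r {H C G : Finset α} (hH : H ⊆ M.E) (hC : C ⊆ M.E \ H) (hG : G ⊆ M.E) :
    ((M.contract H).contract C).r G = (M.contract (C ∪ H)).r G := by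
  have hCE : C ⊆ M.E := hC.trans sdiff_subset
  rw [contract_r hC, contract_r hH, contract_r hH, contract_r (union_subset hCE hH), union_assoc]
  have h₁ : M.r H ≤ M.r (C ∪ H) := M.r_mono subset_union_right (union_subset hCE hH)
  have h₂ : M.r (C ∪ H) ≤ M.r (G ∪ (C ∪ H)) :=
    M.r_mono subset_union_right (union_subset hG (union_subset hCE hH))
  omega

lemma contract_r_anti {C C' G : Finset α} (hC' : C' ⊆ C) (hC : C ⊆ M.E) (hG : G ⊆ M.E) :
    (M.contract C).r G ≤ (M.contract C').r G := by
  have hC'E : C' ⊆ M.E := hC'.trans hC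
  rw [contract_r hC, contract_r hC'E]
  have hsub := M.r_submod (union_subset hG hC'E) hC
  rw [union_assoc, union_eq_right.mpr hC'] at hsub
  have h₁ : M.r C' ≤ M.r ((G ∪ C') ∩ C) :=
    M.r_mono (subset_inter subset_union_right hC') (inter_subset_right.trans hC)
  have h₂ : M.r C' ≤ M.r (G ∪ C') := M.r_mono subset_union_right (union_subset hG hC'E)
  omega

lemma contract_r_inter_add_le {C G H : Finset α} (hC : C ⊆ M.E) (hG : G ⊆ M.E)
    (hH : H ⊆ M.E) :
    (M.contract C).r (G ∩ H) + (M.contract (H ∪ C)).r (G \ H) ≤ (M.contract C).r G := by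
  rw [contract_r hC, contract_r hC, contract_r (union_subset hH hC)]
  have hsub := M.r_submod (union_subset hG hC) (union_subset hH hC)
  have e₁ : G ∪ C ∪ (H ∪ C) = G \ H ∪ (H ∪ C) := by ext; simp only [mem_union, mem_sdiff]; tauto
  have e₂ : (G ∪ C) ∩ (H ∪ C) = G ∩ H ∪ C := by ext; simp only [mem_union, mem_inter]; tauto
  rw [e₁, e₂] at hsub
  have h₁ : M.r C ≤ M.r (G ∩ H ∪ C) :=
    M.r_mono subset_union_right (union_subset (inter_subset_left.trans hG) hC)
  have h₂ : M.r (H ∪ C) ≤ M.r (G \ H ∪ (H ∪ C)) :=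
    M.r_mono subset_union_right (union_subset (sdiff_subset.trans hG) (union_subset hH hC))
  have h₃ : M.r C ≤ M.r (G ∪ C) := M.r_mono subset_union_right (union_subset hG hC)
  omega

lemma Indep.card_inter_le_contract_r {B C G : Finset α} (hB : M.Indep B) (hC : C ⊆ M.E)
    (hG : G ⊆ M.E) (hGC : Disjoint G C) (hspan : M.r (B ∩ C) = M.r C) :
    (B ∩ G).card ≤ (M.contract C).r G := by
  rw [contract_r hC]
  have h := hB.card_inter_le (union_subset hG hC)
  rw [inter_union_distrib_left,
    card_union_of_disjoint (hGC.mono inter_subset_right inter_subset_right)] at h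
  have := (hB.subset (inter_subset_left : B ∩ C ⊆ B)).2
  omega

lemma base_union_of_base_restrict_of_base_contract {H B₁ B₂ : Finset α} (hH : H ⊆ M.E)
    (hB₁ : (M.restrict H).Base B₁) (hB₂ : (M.contract H).Base B₂) : M.Base (B₁ ∪ B₂) := by
  have hB₁H : B₁ ⊆ H := hB₁.1.1.trans inter_subset_left
  have hB₁E : B₁ ⊆ M.E := hB₁.1.1.trans inter_subset_right
  have hB₂E : B₂ ⊆ M.E := hB₂.1.1.trans sdiff_subset
  have hB₂H : Disjoint B₂ H := sdiff_disjoint.mono_left hB₂.1.1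
  have hcard₁ : B₁.card = M.r H := by rw [hB₁.card_eq, restrict_r_E hH]
  have hcard₂ : B₂.card = M.r M.E - M.r H := by rw [hB₂.card_eq, contract_r_E hH]
  have hr₁ : M.r B₁ = B₁.card := hB₁.1.2
  have hr₂ : M.r (B₂ ∪ H) - M.r H = B₂.card := by rw [← contract_r hH]; exact hB₂.1.2
  have hU : B₁ ∪ B₂ ⊆ M.E := union_subset hB₁E hB₂E
  -- submodularity for `B₁ ∪ B₂` and `H` yields `|B₁| + |B₂| ≤ r (B₁ ∪ B₂)`
  have hsub := M.r_submod hU hH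
  rw [union_right_comm, union_eq_right.mpr hB₁H, union_comm H, union_inter_distrib_right,
    inter_eq_left.mpr hB₁H, disjoint_iff_inter_eq_empty.mp hB₂H, union_empty] at hsub
  have hcard : (B₁ ∪ B₂).card = B₁.card + B₂.card :=
    card_union_of_disjoint (hB₂H.symm.mono_left hB₁H)
  have := M.r_le_card hU
  have := M.r_mono hH Subset.rfl
  have := M.r_mono (subset_union_right : H ⊆ B₂ ∪ H) (union_subset hB₂E hH)
  have hr : M.r (B₁ ∪ B₂) = (B₁ ∪ B₂).card := by omega
  exact Indep.base_of_card_eq ⟨hU, hr⟩ (by omega)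

lemma card_union_inter_eq_r {H A B₁ B₂ : Finset α} (hH : H ⊆ M.E) (hA : A ⊆ M.E)
    (hB₁ : B₁ ⊆ H) (hB₂ : Disjoint B₂ H)
    (h₁ : (B₁ ∩ (A ∩ H)).card = M.r (A ∩ H))
    (h₂ : (B₂ ∩ (A \ H)).card = (M.contract H).r (A \ H))
    (hmod : M.r (A ∩ H) + M.r (A ∪ H) = M.r A + M.r H) :
    ((B₁ ∪ B₂) ∩ A).card = M.r A := by
  have e : (B₁ ∪ B₂) ∩ A = B₁ ∩ (A ∩ H) ∪ B₂ ∩ (A \ H) := by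
    ext x
    have : x ∈ B₁ → x ∈ H := fun h => hB₁ h
    have : x ∈ B₂ → x ∉ H := fun h => disjoint_left.mp hB₂ h
    simp only [mem_union, mem_inter, mem_sdiff]
    tauto
  rw [e, card_union_of_disjoint (hB₂.symm.mono (inter_subset_left.trans hB₁) inter_subset_left),
    h₁, h₂, contract_r hH, sdiff_union_self_eq_union]
  have := M.r_mono (subset_union_right : H ⊆ A ∪ H) (union_subset hA hH)
  omega

end FinMatroid

open FinMatroid

section Cells

variable {α : Type*} [DecidableEq α] {m : ℕ} {M : FinMatroid α} {F : Fin m → Finset α}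

/-- For `σ ⊆ S`, the points of `E` lying in exactly those `F j`, `j ∈ S`, with `j ∉ σ`; for
`S = univ` this is the paper's `F_σ⁻ \ F_σ⁺`. -/
def cell (M : FinMatroid α) (F : Fin m → Finset α) (S σ : Finset (Fin m)) : Finset α :=
  M.E.filter fun x => ∀ j ∈ S, j ∈ σ ↔ x ∉ F j

def cellSum (M : FinMatroid α) (F : Fin m → Finset α) (S : Finset (Fin m)) : ℕ :=
  ∑ σ ∈ S.powerset, (M.contract (Fplus F σ)).r (cell M F S σ)

lemma mem_cell {S σ : Finset (Fin m)} {x : α} :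
    x ∈ cell M F S σ ↔ x ∈ M.E ∧ ∀ j ∈ S, (j ∈ σ ↔ x ∉ F j) :=
  mem_filter

lemma cell_subset {S σ : Finset (Fin m)} : cell M F S σ ⊆ M.E := filter_subset _ _

lemma Fplus_subset (hF : ∀ i, F i ⊆ M.E) (σ : Finset (Fin m)) : Fplus F σ ⊆ M.E :=
  Finset.sup_le fun i _ => hF i

lemma Fplus_empty : Fplus F ∅ = ∅ := sup_empty

lemma Fplus_insert (i : Fin m) (σ : Finset (Fin m)) : Fplus F (insert i σ) = F i ∪ Fplus F σ :=
  sup_insert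

lemma Fplus_inter (H : Finset α) (σ : Finset (Fin m)) :
    Fplus (fun j => F j ∩ H) σ = Fplus F σ ∩ H :=
  (sup_inf_distrib_right σ F H).symm

lemma Fplus_sdiff (H : Finset α) (σ : Finset (Fin m)) :
    Fplus (fun j => F j \ H) σ = Fplus F σ \ H :=
  sup_sdiff_right σ F H

lemma disjoint_cell_Fplus {S σ : Finset (Fin m)} (hσ : σ ⊆ S) :
    Disjoint (cell M F S σ) (Fplus F σ) := by
  refine disjoint_left.mpr fun x hx hx' => ?_
  obtain ⟨j, hj, hxj⟩ := mem_sup.mp hx'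
  exact ((mem_cell.mp hx).2 j (hσ hj)).mp hj hxj

lemma cell_insert {S σ : Finset (Fin m)} {i : Fin m} (hi : i ∉ σ) :
    cell M F (insert i S) σ = cell M F S σ ∩ F i := by
  ext x
  simp only [mem_cell, mem_inter, forall_mem_insert, hi, false_iff, not_not]
  tauto

lemma cell_insert_insert {S σ : Finset (Fin m)} {i : Fin m} (hi : i ∉ S) :
    cell M F (insert i S) (insert i σ) = cell M F S σ \ F i := by
  ext x
  simp only [mem_cell, mem_sdiff, forall_mem_insert, mem_insert_self, true_iff]
  have hS : ∀ j ∈ S, (j ∈ insert i σ ↔ j ∈ σ) := fun j hj =>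
    mem_insert.trans (or_iff_right fun h => hi (h ▸ hj))
  constructor
  · rintro ⟨hxE, hxi, hall⟩
    exact ⟨⟨hxE, fun j hj => (hS j hj).symm.trans (hall j hj)⟩, hxi⟩
  · rintro ⟨⟨hxE, hall⟩, hxi⟩
    exact ⟨hxE, hxi, fun j hj => (hS j hj).trans (hall j hj)⟩

lemma cell_restrict (H : Finset α) (S σ : Finset (Fin m)) :
    cell (M.restrict H) (fun j => F j ∩ H) S σ = cell M F S σ ∩ H := by
  ext x
  simp only [mem_cell, mem_inter, show (M.restrict H).E = H ∩ M.E from rfl]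
  constructor
  · rintro ⟨⟨hxH, hxE⟩, hall⟩
    exact ⟨⟨hxE, fun j hj => by simpa [hxH] using hall j hj⟩, hxH⟩
  · rintro ⟨⟨hxE, hall⟩, hxH⟩
    exact ⟨⟨hxH, hxE⟩, fun j hj => by simpa [hxH] using hall j hj⟩

lemma cell_contract (H : Finset α) (S σ : Finset (Fin m)) :
    cell (M.contract H) (fun j => F j \ H) S σ = cell M F S σ \ H := by
  ext x
  simp only [mem_cell, mem_sdiff, show (M.contract H).E = M.E \ H from rfl]
  constructor
  · rintro ⟨⟨hxE, hxH⟩, hall⟩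
    exact ⟨⟨hxE, fun j hj => by simpa [hxH] using hall j hj⟩, hxH⟩
  · rintro ⟨⟨hxE, hall⟩, hxH⟩
    exact ⟨⟨hxE, hxH⟩, fun j hj => by simpa [hxH] using hall j hj⟩

lemma cell_univ (σ : Finset (Fin m)) : cell M F univ σ = Fminus M F σ \ Fplus F σ := by
  ext x
  simp only [mem_cell, Fminus, Fplus, mem_sdiff, mem_filter, mem_sup, mem_univ, true_implies]
  constructor
  · rintro ⟨hxE, hall⟩
    exact ⟨⟨hxE, fun j hj => not_not.mp ((hall j).not.mp hj)⟩,
      fun ⟨j, hj, hxj⟩ => (hall j).mp hj hxj⟩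
  · rintro ⟨⟨hxE, hall⟩, hno⟩
    exact ⟨hxE, fun j =>
      ⟨fun hj hxj => hno ⟨j, hj, hxj⟩, fun hxj => by_contra fun hj => hxj (hall j hj)⟩⟩

lemma card_eq_sum_card_inter_cell {B : Finset α} (hB : B ⊆ M.E) (S : Finset (Fin m)) :
    B.card = ∑ σ ∈ S.powerset, (B ∩ cell M F S σ).card := by
  rw [card_eq_sum_card_fiberwise (f := fun x => S.filter fun j => x ∉ F j) (t := S.powerset)
    fun x _ => mem_powerset.mpr (filter_subset _ _)]
  refine sum_congr rfl fun σ hσ => congrArg card ?_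
  ext x
  simp only [mem_filter, mem_inter, mem_cell, Finset.ext_iff]
  constructor
  · rintro ⟨hxB, hall⟩
    exact ⟨hxB, hB hxB, fun j hj => by simpa [hj] using (hall j).symm⟩
  · rintro ⟨hxB, -, hall⟩
    refine ⟨hxB, fun j => ⟨fun h => (hall j h.1).mpr h.2, fun hj => ?_⟩⟩
    have hjS := mem_powerset.mp hσ hj
    exact ⟨hjS, (hall j hjS).mp hj⟩

lemma cellSum_empty : cellSum M F ∅ = M.r M.E := by
  have hcell : cell M F ∅ ∅ = M.E := filter_true_of_mem fun _ _ j hj => absurd hj (notMem_empty j)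
  simp [cellSum, hcell, Fplus_empty, contract_r (empty_subset M.E), r_empty]

lemma cellSum_insert {S : Finset (Fin m)} {i : Fin m} (hi : i ∉ S) :
    cellSum M F (insert i S) = ∑ σ ∈ S.powerset,
      ((M.contract (Fplus F σ)).r (cell M F S σ ∩ F i) +
        (M.contract (F i ∪ Fplus F σ)).r (cell M F S σ \ F i)) := by
  rw [cellSum, sum_powerset_insert hi, ← sum_add_distrib]
  refine sum_congr rfl fun σ hσ => ?_
  rw [cell_insert fun h => hi (mem_powerset.mp hσ h), cell_insert_insert hi, Fplus_insert]

variable (hF : ∀ i, F i ⊆ M.E)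
include hF

lemma cellSum_insert_le {S : Finset (Fin m)} {i : Fin m} (hi : i ∉ S) :
    cellSum M F (insert i S) ≤ cellSum M F S := by
  rw [cellSum_insert hi, cellSum]
  exact sum_le_sum fun σ _ => contract_r_inter_add_le (Fplus_subset hF σ) cell_subset (hF i)

lemma cellSum_le (S : Finset (Fin m)) : cellSum M F S ≤ M.r M.E := by
  induction S using Finset.induction_on with
  | empty => rw [cellSum_empty]
  | insert i S hi ih => exact (cellSum_insert_le hF hi).trans ih

lemma cellSum_anti {S S' : Finset (Fin m)} (h : S ⊆ S') : cellSum M F S' ≤ cellSum M F S := by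
  suffices ∀ D, cellSum M F (D ∪ S) ≤ cellSum M F S by
    simpa [sdiff_union_of_subset h] using this (S' \ S)
  intro D
  induction D using Finset.induction_on with
  | empty => simp
  | insert i D hi ih =>
    rw [insert_union]
    by_cases hiDS : i ∈ D ∪ S
    · rwa [insert_eq_of_mem hiDS]
    · exact (cellSum_insert_le hF hiDS).trans ih

lemma r_inter_add_r_union_of_cellSum_eq {i j : Fin m} (hij : i ≠ j)
    (h : cellSum M F {i, j} = M.r M.E) :
    M.r (F j ∩ F i) + M.r (F j ∪ F i) = M.r (F j) + M.r (F i) := by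
  have hi : i ∉ ({j} : Finset (Fin m)) := by simpa using hij
  have hj : cellSum M F {j} = M.r M.E :=
    le_antisymm (cellSum_le hF _) (h ▸ cellSum_insert_le hF hi)
  rw [cellSum_insert hi] at h
  rw [cellSum] at hj
  -- both sums are `r E`, so every pairing inequality, in particular the one at `σ = ∅`, is tight
  have htight := (sum_eq_sum_iff_of_le fun σ _ =>
    contract_r_inter_add_le (Fplus_subset hF σ) cell_subset (hF i)).mp (h.trans hj.symm)
    ∅ (empty_mem_powerset _)
  have hcell : cell M F {j} ∅ = F j := by
    ext x
    simp only [mem_cell, mem_singleton, forall_eq, notMem_empty, false_iff, not_not]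
    exact ⟨And.right, fun hx => ⟨hF j hx, hx⟩⟩
  simp only [hcell, Fplus_empty, union_empty, contract_r (empty_subset M.E), r_empty,
    contract_r (hF i), sdiff_union_self_eq_union, Nat.sub_zero] at htight
  have := M.r_mono (subset_union_right : F i ⊆ F j ∪ F i) (union_subset (hF j) (hF i))
  omega

lemma FinMatroid.Indep.r_inter_Fplus {B : Finset α} (hB : M.Indep B) {σ : Finset (Fin m)}
    (hcnt : ∀ i ∈ σ, (B ∩ F i).card = M.r (F i)) : M.r (B ∩ Fplus F σ) = M.r (Fplus F σ) := by
  rw [Fplus, ← inf_eq_inter, sup_inf_distrib_left]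
  exact r_sup_eq_of_r_eq (fun i _ => inter_subset_right) (fun i _ => hF i)
    fun i hi => by rw [inf_eq_inter, (hB.subset inter_subset_left).2, hcnt i hi]

lemma cellSum_eq_of_base {S : Finset (Fin m)} {B : Finset α} (hB : M.Base B)
    (hcnt : ∀ i ∈ S, (B ∩ F i).card = M.r (F i)) : cellSum M F S = M.r M.E := by
  refine le_antisymm (cellSum_le hF S) ?_
  calc M.r M.E = B.card := hB.card_eq.symm
    _ = ∑ σ ∈ S.powerset, (B ∩ cell M F S σ).card := card_eq_sum_card_inter_cell hB.1.1 S
    _ ≤ cellSum M F S := sum_le_sum fun σ hσ =>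
      hB.1.card_inter_le_contract_r (Fplus_subset hF σ) cell_subset
        (disjoint_cell_Fplus (mem_powerset.mp hσ))
        (hB.1.r_inter_Fplus hF fun i hi => hcnt i (mem_powerset.mp hσ hi))

lemma cellSum_insert_le_restrict_add_contract {T : Finset (Fin m)} {i : Fin m} (hi : i ∉ T) :
    cellSum M F (insert i T) ≤ cellSum (M.restrict (F i)) (fun j => F j ∩ F i) T +
      cellSum (M.contract (F i)) (fun j => F j \ F i) T := by
  rw [cellSum_insert hi, cellSum, cellSum, ← sum_add_distrib]
  refine sum_le_sum fun σ _ => add_le_add ?_ (le_of_eq ?_)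
  · rw [cell_restrict, Fplus_inter, restrict_contract_r
      (subset_inter inter_subset_right (inter_subset_left.trans (Fplus_subset hF σ)))]
    exact contract_r_anti inter_subset_left (Fplus_subset hF σ)
      (inter_subset_left.trans cell_subset)
  · rw [cell_contract, Fplus_sdiff, contract_contract_r (hF i)
      (sdiff_subset_sdiff (Fplus_subset hF σ) Subset.rfl) (sdiff_subset.trans cell_subset),
      sdiff_union_self_eq_union, union_comm]

theorem exists_base_of_cellSum_eq {S : Finset (Fin m)} (hsum : cellSum M F S = M.r M.E) :
    ∃ B, M.Base B ∧ ∀ i ∈ S, (B ∩ F i).card = M.r (F i) := by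
  induction S using Finset.induction_on generalizing M F with
  | empty =>
    obtain ⟨B, hB⟩ := M.exists_base
    exact ⟨B, hB, by simp⟩
  | insert i T hi ih =>
    have hH : F i ⊆ M.E := hF i
    have hF₁ : ∀ j, F j ∩ F i ⊆ (M.restrict (F i)).E :=
      fun j => subset_inter inter_subset_right (inter_subset_left.trans (hF j))
    have hF₂ : ∀ j, F j \ F i ⊆ (M.contract (F i)).E :=
      fun j => sdiff_subset_sdiff (hF j) Subset.rfl
    have h₁ := cellSum_le hF₁ T
    have h₂ := cellSum_le hF₂ T
    rw [restrict_r_E hH] at h₁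
    rw [contract_r_E hH] at h₂
    have := cellSum_insert_le_restrict_add_contract hF hi
    have := M.r_mono hH Subset.rfl
    obtain ⟨B₁, hB₁, hcnt₁⟩ := ih hF₁ (by rw [restrict_r_E hH]; omega)
    obtain ⟨B₂, hB₂, hcnt₂⟩ := ih hF₂ (by rw [contract_r_E hH]; omega)
    have hB₁H : B₁ ⊆ F i := hB₁.1.1.trans inter_subset_left
    have hB₂H : Disjoint B₂ (F i) := sdiff_disjoint.mono_left hB₂.1.1
    refine ⟨B₁ ∪ B₂, base_union_of_base_restrict_of_base_contract hH hB₁ hB₂, fun j hj => ?_⟩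
    rcases mem_insert.mp hj with rfl | hjT
    · refine card_union_inter_eq_r hH hH hB₁H hB₂H ?_ (by simp [r_empty]) (by simp)
      rw [inter_self, inter_eq_left.mpr hB₁H, hB₁.card_eq, restrict_r_E hH]
    · have hij : i ≠ j := fun h => hi (h ▸ hjT)
      have hpair : cellSum M F {i, j} = M.r M.E := le_antisymm (cellSum_le hF _)
        (hsum ▸ cellSum_anti hF (insert_subset_insert i (singleton_subset_iff.mpr hjT)))
      exact card_union_inter_eq_r hH (hF j) hB₁H hB₂H (hcnt₁ j hjT) (hcnt₂ j hjT)
        (r_inter_add_r_union_of_cellSum_eq hF hij hpair)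

end Cells

/-- There is a base `B` with `|B ∩ F i| = r (F i)` for all `i` iff
`∑_{σ ⊆ [m]} r_{M/F_σ⁺}(F_σ⁻ \ F_σ⁺) = r E`. -/
theorem statement7 {α : Type*} [DecidableEq α] {m : ℕ} (M : FinMatroid α)
    (F : Fin m → Finset α) (hF : ∀ i, F i ⊆ M.E) :
    (∃ B : Finset α, M.Base B ∧ ∀ i, (B ∩ F i).card = M.r (F i)) ↔
      ∑ σ : Finset (Fin m), (M.contract (Fplus F σ)).r (Fminus M F σ \ Fplus F σ)
        = M.r M.E := by
  have hsum : ∑ σ : Finset (Fin m), (M.contract (Fplus F σ)).r (Fminus M F σ \ Fplus F σ)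
      = cellSum M F univ := by
    simp only [cellSum, powerset_univ, cell_univ]
  rw [hsum]
  constructor
  · rintro ⟨B, hB, hcnt⟩
    exact cellSum_eq_of_base hF hB fun i _ => hcnt i
  · intro h
    obtain ⟨B, hB, hcnt⟩ := exists_base_of_cellSum_eq hF h
    exact ⟨B, hB, fun i => hcnt i (mem_univ i)⟩
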